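/- arXiv:2503.11150 — 2 statements merged into one kernel-verified Lean document; each statement's English description precedes it below -/
import Mathlib

section
/- Let G be a finite directed graph, S a subgroup of the automorphism group of G, and α : V → ℝ, τ : V → ℤ_{>0} functions invariant under S (α(Si) = α(i), τ(Si) = τ(i) for all S ∈ S, i ∈ V). Then α and τ descend to well-defined functions on the quotient graph G/S, and the maximum relative weight over simple cycles in G equals the maximum relative weight over simple cycles in G/S. -/
/-!
Projecting a closed walk of `G` to `G/S` keeps its relative weight. Conversely, since `S` acts by
automorphisms, a closed walk of `G/S` lifts step by step to a walk of `G`; by pigeonhole the lift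
returns to a vertex it has visited at the same phase, which closes it after `m` rounds with the
same relative weight. So `G` and `G/S` have the same closed-walk weights. Cutting a closed walk at
a repeated vertex splits it into two shorter closed walks, one of which is at least as heavy by
the mediant inequality, so every closed-walk weight is dominated by a simple-cycle weight and the
two suprema agree.
-/

open Finset Function

theorem add_div_add_le_max {K : Type*} [Field K] [LinearOrder K] [IsStrictOrderedRing K]
    {a₁ a₂ b₁ b₂ : K} (hb₁ : 0 < b₁) (hb₂ : 0 < b₂) :
    (a₁ + a₂) / (b₁ + b₂) ≤ max (a₁ / b₁) (a₂ / b₂) := by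
  have h₁ : a₁ ≤ max (a₁ / b₁) (a₂ / b₂) * b₁ := (div_le_iff₀ hb₁).1 (le_max_left _ _)
  have h₂ : a₂ ≤ max (a₁ / b₁) (a₂ / b₂) * b₂ := (div_le_iff₀ hb₂).1 (le_max_right _ _)
  rw [div_le_iff₀ (add_pos hb₁ hb₂)]
  linarith

namespace Function.Periodic

variable {M : Type*} [AddCommMonoid M] {g : ℕ → M} {T : ℕ}

theorem sum_range_add (hg : Periodic g T) (a : ℕ) :
    ∑ u ∈ range T, g (a + u) = ∑ u ∈ range T, g u := by
  induction a with
  | zero => simp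
  | succ a ih =>
    rw [← ih]
    cases T with
    | zero => simp
    | succ k =>
      have hlast : g (a + 1 + k) = g (a + 0) := by rw [add_assoc, add_comm 1 k, hg a, add_zero]
      rw [sum_range_succ, sum_range_succ', hlast]
      simp only [add_assoc, add_comm 1]

theorem sum_range_mul (hg : Periodic g T) (m : ℕ) :
    ∑ u ∈ range (m * T), g u = m • ∑ u ∈ range T, g u := by
  induction m with
  | zero => simp
  | succ m ih => rw [Nat.succ_mul, Finset.sum_range_add, ih, hg.sum_range_add, succ_nsmul]

end Function.Periodic

section ClosedWalks

variable {V W : Type*}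

/-- A closed walk of length `T`, unrolled into a `T`-periodic sequence of vertices. -/
structure IsClosedWalk (E : V → V → Prop) (T : ℕ) (c : ℕ → V) : Prop where
  pos : 0 < T
  periodic : Periodic c T
  adj : ∀ n, E (c n) (c (n + 1))

noncomputable def relWeight (α : V → ℝ) (τ : V → ℕ) (T : ℕ) (c : ℕ → V) : ℝ :=
  (∑ s ∈ range T, α (c s)) / ∑ s ∈ range T, (τ (c s) : ℝ)

def cycleWeights (E : V → V → Prop) (α : V → ℝ) (τ : V → ℕ) : Set ℝ :=
  {w | ∃ (T : ℕ) (c : ℕ → V), 0 < T ∧ (∀ s < T, ∀ s' < T, c s = c s' → s = s') ∧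
    (∀ s < T, E (c s) (c ((s + 1) % T))) ∧ w = relWeight α τ T c}

variable {E : V → V → Prop} {α : V → ℝ} {τ : V → ℕ} {T : ℕ} {c : ℕ → V}

theorem isClosedWalk_mod_of_adj_mod {L : ℕ} {d : ℕ → V} (hL : 0 < L)
    (hd : ∀ s < L, E (d s) (d ((s + 1) % L))) : IsClosedWalk E L (fun n => d (n % L)) := by
  refine ⟨hL, fun n => by simp, fun n => ?_⟩
  have h := hd (n % L) (Nat.mod_lt n hL)
  rwa [(Nat.mod_modEq n L).add_right 1] at h

theorem isClosedWalk_mod {L : ℕ} {d : ℕ → V} (hL : 0 < L) (hd : ∀ n < L, E (d n) (d (n + 1)))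
    (hdL : d L = d 0) : IsClosedWalk E L (fun n => d (n % L)) := by
  refine isClosedWalk_mod_of_adj_mod hL fun s hs => ?_
  rcases (show s + 1 ≤ L from hs).lt_or_eq with h | h
  · rw [Nat.mod_eq_of_lt h]
    exact hd s hs
  · rw [h, Nat.mod_self, ← hdL, ← h]
    exact hd s hs

theorem sum_range_mod {M : Type*} [AddCommMonoid M] (g : ℕ → M) (L : ℕ) :
    ∑ u ∈ range L, g (u % L) = ∑ u ∈ range L, g u :=
  sum_congr rfl fun u hu => by rw [Nat.mod_eq_of_lt (mem_range.1 hu)]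

theorem relWeight_mem_cycleWeights (hc : IsClosedWalk E T c)
    (hinj : ∀ s < T, ∀ s' < T, c s = c s' → s = s') : relWeight α τ T c ∈ cycleWeights E α τ :=
  ⟨T, c, hc.pos, hinj, fun s _ => hc.periodic.map_mod_nat (s + 1) ▸ hc.adj s, rfl⟩

theorem exists_isClosedWalk_of_mem_cycleWeights {w : ℝ} (hw : w ∈ cycleWeights E α τ) :
    ∃ T c, IsClosedWalk E T c ∧ w = relWeight α τ T c := by
  obtain ⟨T, c, hT, -, hc, rfl⟩ := hw
  refine ⟨T, _, isClosedWalk_mod_of_adj_mod hT hc, ?_⟩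
  unfold relWeight
  rw [sum_range_mod (fun s => α (c s)), sum_range_mod (fun s => (τ (c s) : ℝ))]

namespace IsClosedWalk

theorem periodic_comp (hc : IsClosedWalk E T c) {β : Type*} (f : V → β) :
    Periodic (fun n => f (c n)) T :=
  hc.periodic.comp f

theorem map {E' : W → W → Prop} {φ : V → W} (hφ : ∀ i j, E i j → E' (φ i) (φ j))
    (hc : IsClosedWalk E T c) : IsClosedWalk E' T (φ ∘ c) :=
  ⟨hc.pos, hc.periodic.comp φ, fun n => hφ _ _ (hc.adj n)⟩

theorem relWeight_nat_mul (hc : IsClosedWalk E T c) {m : ℕ} (hm : 0 < m) :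
    relWeight α τ (m * T) c = relWeight α τ T c := by
  unfold relWeight
  rw [(hc.periodic_comp α).sum_range_mul, (hc.periodic_comp fun v => (τ v : ℝ)).sum_range_mul,
    nsmul_eq_mul, nsmul_eq_mul, mul_div_mul_left _ _ (by exact_mod_cast hm.ne')]

theorem split (hc : IsClosedWalk E T c) {a b : ℕ} (hab : a < b) (hbT : b < T) (hcab : c a = c b) :
    ∃ c₁ c₂, IsClosedWalk E (b - a) c₁ ∧ IsClosedWalk E (T - (b - a)) c₂ ∧
      ∀ f : V → ℝ, ∑ u ∈ range T, f (c u) =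
        ∑ u ∈ range (b - a), f (c₁ u) + ∑ u ∈ range (T - (b - a)), f (c₂ u) := by
  refine ⟨fun n => c (a + n % (b - a)), fun n => c (b + n % (T - (b - a))),
    isClosedWalk_mod (d := fun n => c (a + n)) (by omega) (fun n _ => hc.adj (a + n)) ?_,
    isClosedWalk_mod (d := fun n => c (b + n)) (by omega) (fun n _ => hc.adj (b + n)) ?_,
    fun f => ?_⟩
  · simp only [Nat.add_sub_cancel' hab.le, add_zero, hcab]
  · rw [show b + (T - (b - a)) = a + T by omega, hc.periodic a, add_zero, hcab]
  · have hT : T = (b - a) + (T - (b - a)) := by omega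
    have hb : a + (b - a) = b := by omega
    rw [sum_range_mod (fun n => f (c (a + n))), sum_range_mod (fun n => f (c (b + n))),
      ← (hc.periodic_comp f).sum_range_add a]
    conv_lhs => rw [hT, Finset.sum_range_add]
    simp only [← add_assoc, hb]

theorem exists_relWeight_le (hτ : ∀ v, 0 < τ v) (hc : IsClosedWalk E T c) :
    ∃ w ∈ cycleWeights E α τ, relWeight α τ T c ≤ w := by
  induction T using Nat.strong_induction_on generalizing c with
  | _ T ih =>
    by_cases hinj : ∀ s < T, ∀ s' < T, c s = c s' → s = s'
    · exact ⟨_, relWeight_mem_cycleWeights hc hinj, le_rfl⟩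
    obtain ⟨a, b, hab, hbT, hcab⟩ : ∃ a b, a < b ∧ b < T ∧ c a = c b := by
      push Not at hinj
      obtain ⟨s, hs, s', hs', heq, hne⟩ := hinj
      rcases hne.lt_or_gt with h | h
      exacts [⟨s, s', h, hs', heq⟩, ⟨s', s, h, hs, heq.symm⟩]
    obtain ⟨c₁, c₂, hc₁, hc₂, hsum⟩ := hc.split hab hbT hcab
    have hpos : ∀ {L d}, IsClosedWalk E L d → (0 : ℝ) < ∑ u ∈ range L, (τ (d u) : ℝ) :=
      fun hd => sum_pos (fun u _ => by exact_mod_cast hτ _) (nonempty_range_iff.2 hd.pos.ne')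
    have hmed :
        relWeight α τ T c ≤ max (relWeight α τ (b - a) c₁) (relWeight α τ (T - (b - a)) c₂) := by
      unfold relWeight
      rw [hsum α, hsum fun v => (τ v : ℝ)]
      exact add_div_add_le_max (hpos hc₁) (hpos hc₂)
    rcases le_max_iff.1 hmed with h | h
    · obtain ⟨w, hw, hle⟩ := ih _ (by omega) hc₁
      exact ⟨w, hw, h.trans hle⟩
    · obtain ⟨w, hw, hle⟩ := ih _ (by omega) hc₂
      exact ⟨w, hw, h.trans hle⟩

theorem exists_lift [Finite V] {E' : W → W → Prop} {c : ℕ → W} {φ : V → W}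
    (hφ : Surjective φ) (hlift : ∀ v y, E' (φ v) y → ∃ u, φ u = y ∧ E v u)
    (hc : IsClosedWalk E' T c) :
    ∃ m, 0 < m ∧ ∃ d, IsClosedWalk E (m * T) d ∧ ∀ n, φ (d n) = c n := by
  obtain ⟨d, hdc, hdE⟩ : ∃ d : ℕ → V, (∀ n, φ (d n) = c n) ∧ ∀ n, E (d n) (d (n + 1)) := by
    choose next hnext using hlift
    obtain ⟨v₀, hv₀⟩ := hφ (c 0)
    let d : ∀ n, {v // φ v = c n} := fun n => Nat.rec ⟨v₀, hv₀⟩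
      (fun n p => ⟨next p.1 _ (p.2.symm ▸ hc.adj n), (hnext _ _ _).1⟩) n
    exact ⟨fun n => (d n).1, fun n => (d n).2, fun n => (hnext _ _ _).2⟩
  obtain ⟨p, q, hpq, hdpq⟩ := Set.finite_univ.exists_lt_map_eq_of_forall_mem
    (f := fun k => d (k * T)) fun _ => Set.mem_univ _
  refine ⟨q - p, Nat.sub_pos_of_lt hpq, _, isClosedWalk_mod (d := fun n => d (p * T + n))
    (Nat.mul_pos (Nat.sub_pos_of_lt hpq) hc.pos) (fun n _ => hdE _) ?_, fun n => ?_⟩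
  · simp only [← add_mul, Nat.add_sub_cancel' hpq.le, add_zero]
    exact hdpq.symm
  · have hp : Periodic c (p * T) := by simpa using hc.periodic.nat_mul p
    have hqp : Periodic c ((q - p) * T) := by simpa using hc.periodic.nat_mul (q - p)
    rw [hdc, add_comm, hp, hqp.map_mod_nat]

end IsClosedWalk

section Orbits

variable {S : Subgroup (Equiv.Perm V)} {r : V → V → Prop}

theorem equivalence_of_forall_iff (hr : ∀ i j, r i j ↔ ∃ g ∈ S, g i = j) : Equivalence r where
  refl i := (hr i i).2 ⟨1, S.one_mem, rfl⟩
  symm {i j} h := by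
    obtain ⟨g, hg, rfl⟩ := (hr i j).1 h
    exact (hr _ _).2 ⟨g⁻¹, S.inv_mem hg, by simp⟩
  trans {i j k} hij hjk := by
    obtain ⟨g, hg, rfl⟩ := (hr i j).1 hij
    obtain ⟨g', hg', rfl⟩ := (hr _ k).1 hjk
    exact (hr _ _).2 ⟨g' * g, S.mul_mem hg' hg, rfl⟩

theorem eq_of_rel_of_forall_apply_eq {β : Type*} {f : V → β}
    (hr : ∀ i j, r i j ↔ ∃ g ∈ S, g i = j) (hf : ∀ g ∈ S, ∀ i, f (g i) = f i) (i j : V)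
    (hij : r i j) : f i = f j := by
  obtain ⟨g, hg, rfl⟩ := (hr i j).1 hij
  exact (hf g hg i).symm

theorem exists_adj_of_adj_mk {E' : Quot r → Quot r → Prop}
    (hr : ∀ i j, r i j ↔ ∃ g ∈ S, g i = j) (hSE : ∀ g ∈ S, ∀ i j, E i j → E (g i) (g j))
    (hE' : ∀ x y, E' x y ↔ ∃ i j, Quot.mk r i = x ∧ Quot.mk r j = y ∧ E i j)
    (v : V) (y : Quot r) (h : E' (Quot.mk r v) y) : ∃ u, Quot.mk r u = y ∧ E v u := by
  obtain ⟨i, j, hi, rfl, hij⟩ := (hE' _ _).1 h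
  obtain ⟨g, hg, rfl⟩ :=
    (hr i v).1 ((equivalence_of_forall_iff hr).eqvGen_iff.1 (Quot.eqvGen_exact hi))
  exact ⟨g j, (Quot.sound ((hr _ _).2 ⟨g, hg, rfl⟩)).symm, hSE g hg i j hij⟩

end Orbits

end ClosedWalks

/-- Symmetry reduction: if a subgroup `S` of graph automorphisms leaves the weights `α` and
transition times `τ` invariant, then `α` and `τ` descend to the quotient graph and the maximum
relative weight over simple cycles in `G` equals the maximum relative weight over simple
cycles in the quotient graph `G/S`. -/
theorem max_cycle_weight_quotient
    {V : Type*} [Fintype V] (E : V → V → Prop)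
    (S : Subgroup (Equiv.Perm V))
    (hSE : ∀ g ∈ S, ∀ i j : V, E i j → E (g i) (g j))
    (α : V → ℝ) (τ : V → ℕ) (hτ : ∀ v, 0 < τ v)
    (hαS : ∀ g ∈ S, ∀ i : V, α (g i) = α i)
    (hτS : ∀ g ∈ S, ∀ i : V, τ (g i) = τ i)
    (r : V → V → Prop) (hr : ∀ i j : V, r i j ↔ ∃ g ∈ S, g i = j)
    (E' : Quot r → Quot r → Prop)
    (hE' : ∀ x y : Quot r, E' x y ↔
      ∃ i j : V, Quot.mk r i = x ∧ Quot.mk r j = y ∧ E i j) :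
    ∃ (α' : Quot r → ℝ) (τ' : Quot r → ℕ),
      (∀ v : V, α' (Quot.mk r v) = α v) ∧
      (∀ v : V, τ' (Quot.mk r v) = τ v) ∧
      sSup {w : ℝ | ∃ (T : ℕ) (c : ℕ → V), 0 < T ∧
          (∀ s < T, ∀ s' < T, c s = c s' → s = s') ∧
          (∀ s < T, E (c s) (c ((s + 1) % T))) ∧
          w = (∑ s ∈ Finset.range T, α (c s)) /
            (∑ s ∈ Finset.range T, (τ (c s) : ℝ))} =
      sSup {w : ℝ | ∃ (T : ℕ) (c : ℕ → Quot r), 0 < T ∧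
          (∀ s < T, ∀ s' < T, c s = c s' → s = s') ∧
          (∀ s < T, E' (c s) (c ((s + 1) % T))) ∧
          w = (∑ s ∈ Finset.range T, α' (c s)) /
            (∑ s ∈ Finset.range T, (τ' (c s) : ℝ))} := by
  set α' := Quot.lift α (eq_of_rel_of_forall_apply_eq hr hαS)
  set τ' := Quot.lift τ (eq_of_rel_of_forall_apply_eq hr hτS)
  refine ⟨α', τ', fun _ => rfl, fun _ => rfl, ?_⟩
  show sSup (cycleWeights E α τ) = sSup (cycleWeights E' α' τ')
  apply csSup_eq_csSup_of_forall_exists_le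
  · intro w hw
    obtain ⟨T, c, hc, rfl⟩ := exists_isClosedWalk_of_mem_cycleWeights hw
    exact (hc.map fun i j h => (hE' _ _).2 ⟨i, j, rfl, rfl, h⟩).exists_relWeight_le (Quot.ind hτ)
  · intro w hw
    obtain ⟨T, c, hc, rfl⟩ := exists_isClosedWalk_of_mem_cycleWeights hw
    obtain ⟨m, hm, d, hd, hdc⟩ :=
      hc.exists_lift Quot.mk_surjective (exists_adj_of_adj_mk hr hSE hE')
    obtain ⟨w, hw, hle⟩ := hd.exists_relWeight_le (α := α) hτ
    refine ⟨w, hw, ?_⟩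
    calc relWeight α' τ' T c = relWeight α' τ' (m * T) c := (hc.relWeight_nat_mul hm).symm
      _ = relWeight α τ (m * T) d := by rw [← funext hdc]; rfl
      _ ≤ w := hle
end

section
/- For d = m + s with integer m ≥ 0 and s ∈ (0,1], define the singular value function ω_d(L) = α_1(L)⋯α_m(L)·α_{m+1}(L)^s (with ω_0 := 1). Then ω_d is submultiplicative: ω_d(L_2 L_1) ≤ ω_d(L_1)·ω_d(L_2) for composable linear maps L_1, L_2 between finite-dimensional inner product spaces. -/
/-!
For `k ≤ min n p` let `z₁, …, z_k` be orthonormal eigenvectors of `(L₂L₁)*(L₂L₁)` for the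
eigenvalues `c₁², …, c_k²`. The Gram matrix of `L₂L₁z` is `diag(c²)`, so its determinant is
`(c₁⋯c_k)²`. If `L*L` has an orthonormal eigenbasis `w` with decreasing eigenvalues `d`, then
`Gram(Lv) = Mᵀ diag(d) M`, where `M` is the coordinate matrix of `v` in `w`, and Cauchy–Binet writes
`det (Mᵀ diag(d) M)` as the sum of `d_{f 1}⋯d_{f k} · det(M_f)²` over increasing `f`. Each weight
is at most `d₁⋯d_k`, so `det Gram(Lv) ≤ d₁⋯d_k · det Gram(v)`. Applying this to `L₂` and then
to `L₁` gives `ω_k(L₂L₁) ≤ ω_k(L₁) ω_k(L₂)`. The fractional order interpolates between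
`k = m` and `k = m + 1`, since `ω_{m+s} = ω_m^{1-s} ω_{m+1}^s`.
-/

open Finset

theorem Tuple.sort_comp_perm_of_strictMono {k : ℕ} {α : Type*} [LinearOrder α]
    {f : Fin k → α} (hf : StrictMono f) (σ : Equiv.Perm (Fin k)) : Tuple.sort (f ∘ σ) = σ⁻¹ := by
  refine (Tuple.eq_sort_iff.2 ⟨?_, fun i j hij h ↦ ?_⟩).symm
  · simpa [Function.comp_assoc] using hf.monotone
  · exact absurd (hf.injective (by simpa using h)) hij.ne

theorem Finset.sum_injective_eq_sum_strictMono_sum_perm {k : ℕ} {α M : Type*} [LinearOrder α]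
    [Fintype α] [AddCommMonoid M] (g : (Fin k → α) → M) :
    ∑ φ : Fin k → α with Function.Injective φ, g φ =
      ∑ f : Fin k → α with StrictMono f, ∑ σ : Equiv.Perm (Fin k), g (f ∘ σ) := by
  rw [← sum_product']
  refine sum_nbij' (fun φ ↦ (φ ∘ Tuple.sort φ, (Tuple.sort φ)⁻¹)) (fun x ↦ x.1 ∘ x.2)
    ?_ ?_ ?_ ?_ ?_ <;> simp only [mem_filter, mem_product, mem_univ, true_and, and_true]
  · exact fun φ hφ ↦
      (Tuple.monotone_sort φ).strictMono_of_injective (hφ.comp (Tuple.sort φ).injective)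
  · exact fun x hx ↦ hx.injective.comp x.2.injective
  · intro φ _
    ext i
    simp
  · rintro ⟨f, σ⟩ hf
    simp [Tuple.sort_comp_perm_of_strictMono hf, Function.comp_assoc]
  · intro φ _
    simp [Function.comp_assoc]

namespace Matrix

variable {R : Type*} [CommRing R]

theorem det_mul_eq_sum_prod_mul_det_submatrix {m n : Type*} [Fintype m] [DecidableEq m]
    [Fintype n] [DecidableEq n] (A : Matrix m n R) (B : Matrix n m R) :
    (A * B).det = ∑ φ : m → n, (∏ i, A i (φ i)) * (B.submatrix φ id).det := by
  have rows : A * B = fun i ↦ ∑ j, A i j • B j := by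
    ext i j'
    simp [mul_apply, Finset.sum_apply]
  rw [rows]
  exact (detRowAlternating.toMultilinearMap.map_sum fun i j ↦ A i j • B j).trans
    (sum_congr rfl fun φ _ ↦ detRowAlternating.toMultilinearMap.map_smul_univ _ _)

theorem sum_perm_prod_mul_det_submatrix {k : ℕ} {n : Type*} (A : Matrix (Fin k) n R)
    (B : Matrix n (Fin k) R) (f : Fin k → n) :
    ∑ σ : Equiv.Perm (Fin k), (∏ i, A i ((f ∘ σ) i)) * (B.submatrix (f ∘ σ) id).det =
      (A.submatrix id f).det * (B.submatrix f id).det := by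
  have row_permute (σ : Equiv.Perm (Fin k)) :
      (B.submatrix (f ∘ σ) id).det = Equiv.Perm.sign σ * (B.submatrix f id).det := by
    rw [← det_permute]
    rfl
  rw [← det_transpose (A.submatrix id f), det_apply, sum_mul]
  refine sum_congr rfl fun σ _ ↦ ?_
  rw [row_permute, Units.smul_def, zsmul_eq_mul]
  simp only [Function.comp_apply, transpose_apply, submatrix_apply, id]
  ring

variable {k : ℕ} {n : Type*} [Fintype n] [LinearOrder n]

theorem det_mul_eq_sum_det_submatrix_mul_det_submatrix (A : Matrix (Fin k) n R)
    (B : Matrix n (Fin k) R) :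
    (A * B).det = ∑ f : Fin k → n with StrictMono f,
      (A.submatrix id f).det * (B.submatrix f id).det := by
  have noninjective_vanish (φ : Fin k → n) (hφ : ¬ Function.Injective φ) :
      (∏ i, A i (φ i)) * (B.submatrix φ id).det = 0 := by
    obtain ⟨i, j, hij, hne⟩ : ∃ i j, φ i = φ j ∧ i ≠ j := by
      simpa [Function.Injective] using hφ
    rw [det_zero_of_row_eq hne (by ext; simp [hij]), mul_zero]
  rw [det_mul_eq_sum_prod_mul_det_submatrix,
    ← sum_filter_of_ne fun φ _ ↦ not_imp_comm.1 (noninjective_vanish φ),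
    sum_injective_eq_sum_strictMono_sum_perm]
  exact sum_congr rfl fun f _ ↦ sum_perm_prod_mul_det_submatrix A B f

theorem det_transpose_mul_diagonal_mul_le (M : Matrix n (Fin k) ℝ) (d : n → ℝ) (K : ℝ)
    (hK : ∀ f : Fin k → n, StrictMono f → ∏ i, d (f i) ≤ K) :
    (Mᵀ * diagonal d * M).det ≤ K * (Mᵀ * M).det := by
  have minor (f : Fin k → n) :
      ((Mᵀ * diagonal d).submatrix id f).det = (M.submatrix f id).det * ∏ i, d (f i) := by
    have : (Mᵀ * diagonal d).submatrix id f = (M.submatrix f id)ᵀ * diagonal (d ∘ f) := by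
      ext
      simp [mul_diagonal]
    rw [this, det_mul, det_transpose, det_diagonal]
    rfl
  rw [det_mul_eq_sum_det_submatrix_mul_det_submatrix,
    det_mul_eq_sum_det_submatrix_mul_det_submatrix, mul_sum]
  refine sum_le_sum fun f hf ↦ ?_
  rw [minor, ← transpose_submatrix, det_transpose, mul_right_comm, mul_comm K]
  exact mul_le_mul_of_nonneg_left (hK f (mem_filter.1 hf).2) (mul_self_nonneg _)

end Matrix

theorem Fin.le_val_of_strictMono {k p : ℕ} {f : Fin k → Fin p} (hf : StrictMono f)
    (i : Fin k) : (i : ℕ) ≤ f i := by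
  obtain ⟨i, hi⟩ := i
  induction i with
  | zero => exact Nat.zero_le _
  | succ j ih => exact (ih (by omega)).trans_lt (hf (Nat.lt_succ_self j))

theorem Antitone.prod_comp_strictMono_le {R : Type*} [CommSemiring R] [PartialOrder R]
    [IsOrderedRing R] {k p : ℕ} {d : Fin p → R} (hd : Antitone d) (hd0 : ∀ i, 0 ≤ d i)
    (hkp : k ≤ p) {f : Fin k → Fin p} (hf : StrictMono f) :
    ∏ i, d (f i) ≤ ∏ i, d (Fin.castLE hkp i) :=
  prod_le_prod (fun _ _ ↦ hd0 _) fun i _ ↦ hd (Fin.le_def.2 (Fin.le_val_of_strictMono hf i))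

theorem Fin.prod_castLE_succ {M : Type*} [CommMonoid M] {k n : ℕ} (h : k < n)
    (f : Fin n → M) :
    ∏ i : Fin (k + 1), f (Fin.castLE h i) = (∏ i : Fin k, f (Fin.castLE h.le i)) * f ⟨k, h⟩ := by
  rw [Fin.prod_univ_castSucc]
  rfl

theorem Orthonormal.exists_orthonormalBasis_eq {𝕜 E ι : Type*} [RCLike 𝕜]
    [NormedAddCommGroup E] [InnerProductSpace 𝕜 E] [FiniteDimensional 𝕜 E] [Fintype ι]
    {u : ι → E} (hu : Orthonormal 𝕜 u) (hcard : Module.finrank 𝕜 E = Fintype.card ι) :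
    ∃ U : OrthonormalBasis ι 𝕜 E, ⇑U = u :=
  ⟨.mk hu (hu.linearIndependent.span_eq_top_of_card_eq_finrank' hcard.symm).ge,
    OrthonormalBasis.coe_mk _ _⟩

open Matrix

section Gram

variable {E F G : Type*}
  [NormedAddCommGroup E] [InnerProductSpace ℝ E] [FiniteDimensional ℝ E]
  [NormedAddCommGroup F] [InnerProductSpace ℝ F] [FiniteDimensional ℝ F]
  [NormedAddCommGroup G] [InnerProductSpace ℝ G] [FiniteDimensional ℝ G]

theorem gram_comp_eq_diagonal {n : Type*} [DecidableEq n] (T : E →ₗ[ℝ] G) {v : n → E}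
    (hv : Orthonormal ℝ v) (d : n → ℝ)
    (hTv : ∀ i, LinearMap.adjoint T (T (v i)) = d i • v i) :
    gram ℝ (T ∘ v) = diagonal d := by
  ext i j
  rw [gram_apply, Function.comp_apply, Function.comp_apply, ← LinearMap.adjoint_inner_left, hTv,
    real_inner_smul_left, orthonormal_iff_ite.1 hv, diagonal_apply]
  split_ifs <;> simp [*]

theorem gram_comp_eq_transpose_mul_diagonal_mul {ι n : Type*} [Fintype ι] [DecidableEq ι]
    (W : OrthonormalBasis ι ℝ F) (L : F →ₗ[ℝ] G) (d : ι → ℝ)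
    (hW : ∀ l, LinearMap.adjoint L (L (W l)) = d l • W l) (v : n → F) :
    gram ℝ (L ∘ v) =
      (of fun l j ↦ W.repr (v j) l)ᵀ * diagonal d * of fun l j ↦ W.repr (v j) l := by
  ext i j
  rw [gram_apply, Function.comp_apply, Function.comp_apply, ← LinearMap.adjoint_inner_left,
    ← W.sum_repr (v i)]
  simp [map_sum, hW, sum_inner, real_inner_smul_left, mul_apply, W.repr_apply_apply,
    diagonal_apply, mul_assoc]

theorem det_gram_comp_le {p k : ℕ} (W : OrthonormalBasis (Fin p) ℝ F) (L : F →ₗ[ℝ] G)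
    {d : Fin p → ℝ} (hd : Antitone d) (hd0 : ∀ i, 0 ≤ d i)
    (hW : ∀ l, LinearMap.adjoint L (L (W l)) = d l • W l) (hkp : k ≤ p) (v : Fin k → F) :
    (gram ℝ (L ∘ v)).det ≤ (∏ i : Fin k, d (Fin.castLE hkp i)) * (gram ℝ v).det := by
  rw [gram_comp_eq_transpose_mul_diagonal_mul W L d hW, gram_eq_conjTranspose_mul W,
    conjTranspose_eq_transpose_of_trivial]
  exact det_transpose_mul_diagonal_mul_le _ d _ fun _ hf ↦ hd.prod_comp_strictMono_le hd0 hkp hf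

theorem Antitone.sq_of_nonneg {α : Type*} [Preorder α] {a : α → ℝ} (ha : Antitone a)
    (ha0 : ∀ i, 0 ≤ a i) :
    Antitone fun i ↦ a i ^ 2 :=
  fun _ j hij ↦ pow_le_pow_left₀ (ha0 j) (ha hij) 2

theorem prod_singularValues_comp_le_mul {n p k : ℕ}
    (L₁ : E →ₗ[ℝ] F) (L₂ : F →ₗ[ℝ] G)
    (a : Fin n → ℝ) (ha : Antitone a) (ha0 : ∀ i, 0 ≤ a i)
    (U : OrthonormalBasis (Fin n) ℝ E)
    (hU : ∀ i, LinearMap.adjoint L₁ (L₁ (U i)) = a i ^ 2 • U i)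
    (b : Fin p → ℝ) (hb : Antitone b) (hb0 : ∀ i, 0 ≤ b i)
    (W : OrthonormalBasis (Fin p) ℝ F)
    (hW : ∀ i, LinearMap.adjoint L₂ (L₂ (W i)) = b i ^ 2 • W i)
    (c : Fin k → ℝ) (hc0 : ∀ i, 0 ≤ c i) (z : Fin k → E) (hz : Orthonormal ℝ z)
    (hez : ∀ i, LinearMap.adjoint (L₂ ∘ₗ L₁) ((L₂ ∘ₗ L₁) (z i)) = c i ^ 2 • z i)
    (hkn : k ≤ n) (hkp : k ≤ p) :
    ∏ i, c i ≤ (∏ i : Fin k, a (Fin.castLE hkn i)) * ∏ i : Fin k, b (Fin.castLE hkp i) := by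
  have h₂ :=
    det_gram_comp_le W L₂ (hb.sq_of_nonneg hb0) (fun _ ↦ sq_nonneg _) hW hkp (L₁ ∘ z)
  have h₁ := det_gram_comp_le U L₁ (ha.sq_of_nonneg ha0) (fun _ ↦ sq_nonneg _) hU hkn z
  rw [gram_eq_one_iff_orthonormal.2 hz, det_one, mul_one] at h₁
  refine (pow_le_pow_iff_left₀ (prod_nonneg fun _ _ ↦ hc0 _)
    (mul_nonneg (prod_nonneg fun _ _ ↦ ha0 _) (prod_nonneg fun _ _ ↦ hb0 _)) two_ne_zero).1 ?_
  calc (∏ i, c i) ^ 2 = (gram ℝ (L₂ ∘ L₁ ∘ z)).det := by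
        rw [← prod_pow, ← det_diagonal, ← gram_comp_eq_diagonal (L₂ ∘ₗ L₁) hz _ hez]
        rfl
    _ ≤ (∏ i : Fin k, b (Fin.castLE hkp i) ^ 2) * ∏ i : Fin k, a (Fin.castLE hkn i) ^ 2 :=
        h₂.trans (mul_le_mul_of_nonneg_left h₁ (prod_nonneg fun _ _ ↦ sq_nonneg _))
    _ = _ := by rw [prod_pow, prod_pow, mul_pow, mul_comm]

end Gram

theorem Real.mul_rpow_le_mul_rpow_of_le_of_mul_le {C X γ δ s : ℝ} (hC : 0 ≤ C)
    (hγ : 0 ≤ γ) (hδ : 0 ≤ δ) (hs0 : 0 ≤ s) (hs1 : s ≤ 1) (h₀ : C ≤ X)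
    (h₁ : C * γ ≤ X * δ) :
    C * γ ^ s ≤ X * δ ^ s := by
  rcases hC.eq_or_lt with rfl | hC
  · simpa using mul_nonneg h₀ (rpow_nonneg hδ s)
  have hX : 0 < X := hC.trans_le h₀
  have interpolate {A x : ℝ} (hA : 0 < A) (hx : 0 ≤ x) :
      A * x ^ s = A ^ (1 - s) * (A * x) ^ s := by
    rw [mul_rpow hA.le hx, ← mul_assoc, ← rpow_add hA, sub_add_cancel, rpow_one]
  rw [interpolate hC hγ, interpolate hX hδ]
  exact mul_le_mul (rpow_le_rpow hC.le h₀ (by linarith))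
    (rpow_le_rpow (by positivity) h₁ hs0) (by positivity) (by positivity)

theorem singular_value_function_submultiplicative_general
    {E F G : Type*}
    [NormedAddCommGroup E] [InnerProductSpace ℝ E] [FiniteDimensional ℝ E]
    [NormedAddCommGroup F] [InnerProductSpace ℝ F] [FiniteDimensional ℝ F]
    [NormedAddCommGroup G] [InnerProductSpace ℝ G] [FiniteDimensional ℝ G]
    {n p m : ℕ} (hn : Module.finrank ℝ E = n) (hp : Module.finrank ℝ F = p)
    (hmn : m < n) (hmp : m < p)
    (s : ℝ) (hs0 : 0 < s) (hs1 : s ≤ 1)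
    (L₁ : E →ₗ[ℝ] F) (L₂ : F →ₗ[ℝ] G)
    (a : Fin n → ℝ) (ha : Antitone a) (ha0 : ∀ i, 0 ≤ a i)
    (u : Fin n → E) (hu : Orthonormal ℝ u)
    (heu : ∀ i, LinearMap.adjoint L₁ (L₁ (u i)) = a i ^ 2 • u i)
    (b : Fin p → ℝ) (hb : Antitone b) (hb0 : ∀ i, 0 ≤ b i)
    (w : Fin p → F) (hw : Orthonormal ℝ w)
    (hew : ∀ i, LinearMap.adjoint L₂ (L₂ (w i)) = b i ^ 2 • w i)
    (c : Fin n → ℝ) (hc0 : ∀ i, 0 ≤ c i)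
    (z : Fin n → E) (hz : Orthonormal ℝ z)
    (hez : ∀ i, LinearMap.adjoint (L₂ ∘ₗ L₁) ((L₂ ∘ₗ L₁) (z i)) = c i ^ 2 • z i) :
    (∏ i : Fin m, c (Fin.castLE hmn.le i)) * c ⟨m, hmn⟩ ^ s ≤
      ((∏ i : Fin m, a (Fin.castLE hmn.le i)) * a ⟨m, hmn⟩ ^ s) *
        ((∏ i : Fin m, b (Fin.castLE hmp.le i)) * b ⟨m, hmp⟩ ^ s) := by
  obtain ⟨U, rfl⟩ := hu.exists_orthonormalBasis_eq (by simpa using hn)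
  obtain ⟨W, rfl⟩ := hw.exists_orthonormalBasis_eq (by simpa using hp)
  have integer_order (k : ℕ) (hkn : k ≤ n) (hkp : k ≤ p) :=
    prod_singularValues_comp_le_mul L₁ L₂ a ha ha0 U heu b hb hb0 W hew (c ∘ Fin.castLE hkn)
      (fun _ ↦ hc0 _) (z ∘ Fin.castLE hkn) (hz.comp _ (Fin.castLE_injective hkn))
      (fun _ ↦ hez _) hkn hkp
  have order_m := integer_order m hmn.le hmp.le
  have order_m_succ := integer_order (m + 1) hmn hmp
  simp only [Function.comp_apply, Fin.prod_castLE_succ] at order_m order_m_succ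
  calc _ ≤ ((∏ i : Fin m, a (Fin.castLE hmn.le i)) * ∏ i : Fin m, b (Fin.castLE hmp.le i)) *
        (a ⟨m, hmn⟩ * b ⟨m, hmp⟩) ^ s :=
      Real.mul_rpow_le_mul_rpow_of_le_of_mul_le (prod_nonneg fun _ _ ↦ hc0 _) (hc0 _)
        (mul_nonneg (ha0 _) (hb0 _)) hs0.le hs1 order_m (order_m_succ.trans_eq (by ring))
    _ = _ := by
      rw [Real.mul_rpow (ha0 _) (hb0 _)]
      ring

/-- Submultiplicativity of the singular value function `ω_d` of order `d = m + s`,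
`s ∈ (0,1]`: `ω_d(L₂ ∘ L₁) ≤ ω_d(L₁) · ω_d(L₂)`, where the singular values of each map are
given as antitone nonnegative families coming from orthonormal eigenbases of the
corresponding `L*L`. -/
theorem singular_value_function_submultiplicative
    {E F G : Type*}
    [NormedAddCommGroup E] [InnerProductSpace ℝ E] [FiniteDimensional ℝ E]
    [NormedAddCommGroup F] [InnerProductSpace ℝ F] [FiniteDimensional ℝ F]
    [NormedAddCommGroup G] [InnerProductSpace ℝ G] [FiniteDimensional ℝ G]
    {n p m : ℕ} (hn : Module.finrank ℝ E = n) (hp : Module.finrank ℝ F = p)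
    (hmn : m < n) (hmp : m < p)
    (s : ℝ) (hs0 : 0 < s) (hs1 : s ≤ 1)
    (L₁ : E →ₗ[ℝ] F) (L₂ : F →ₗ[ℝ] G)
    (a : Fin n → ℝ) (ha : Antitone a) (ha0 : ∀ i, 0 ≤ a i)
    (u : Fin n → E) (hu : Orthonormal ℝ u)
    (heu : ∀ i, LinearMap.adjoint L₁ (L₁ (u i)) = a i ^ 2 • u i)
    (b : Fin p → ℝ) (hb : Antitone b) (hb0 : ∀ i, 0 ≤ b i)
    (w : Fin p → F) (hw : Orthonormal ℝ w)
    (hew : ∀ i, LinearMap.adjoint L₂ (L₂ (w i)) = b i ^ 2 • w i)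
    (c : Fin n → ℝ) (hc : Antitone c) (hc0 : ∀ i, 0 ≤ c i)
    (z : Fin n → E) (hz : Orthonormal ℝ z)
    (hez : ∀ i, LinearMap.adjoint (L₂ ∘ₗ L₁) ((L₂ ∘ₗ L₁) (z i)) = c i ^ 2 • z i) :
    (∏ i : Fin m, c (Fin.castLE hmn.le i)) * c ⟨m, hmn⟩ ^ s ≤
      ((∏ i : Fin m, a (Fin.castLE hmn.le i)) * a ⟨m, hmn⟩ ^ s) *
        ((∏ i : Fin m, b (Fin.castLE hmp.le i)) * b ⟨m, hmp⟩ ^ s) :=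
  singular_value_function_submultiplicative_general hn hp hmn hmp s hs0 hs1 L₁ L₂ a ha ha0 u hu heu
    b hb hb0 w hw hew c hc0 z hz hez
end
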